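/- arXiv:1710.08681 — 4 statements merged into one kernel-verified Lean document; each statement's English description precedes it below -/
import Mathlib

section
/- Let Λ : L(H) → L(K) be a channel between finite-dimensional complex Hilbert spaces. There is a unique orthogonal projection R ∈ L(K) (the support projection of Λ) such that Λ*(R) = 1_H and such that every orthogonal projection Q ≤ R with Λ*(Q) = 1_H equals R. Moreover: (i) Λ*(B) = Λ*(RB) = Λ*(BR) = Λ*(RBR) for all B ∈ L(K); (ii) if E ∈ L(K) is positive semidefinite and Λ*(E) = 0, then RER = 0; (iii) if E ∈ L(K) is an effect (0 ≤ E ≤ 1_K) and Λ*(E) is an orthogonal projection, then RER is an orthogonal projection and RE = ER. -/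
open scoped ComplexOrder

noncomputable section

/-- A positive semidefinite operator on a finite-dimensional complex Hilbert space. -/
def IsPosOp {E : Type*} [NormedAddCommGroup E] [InnerProductSpace ℂ E]
    [FiniteDimensional ℂ E] (T : E →ₗ[ℂ] E) : Prop :=
  LinearMap.adjoint T = T ∧ ∀ x : E, 0 ≤ (inner ℂ (T x) x : ℂ)

/-- An orthogonal projection: a self-adjoint idempotent operator. -/
def IsOrthoProj {E : Type*} [NormedAddCommGroup E] [InnerProductSpace ℂ E]
    [FiniteDimensional ℂ E] (P : E →ₗ[ℂ] E) : Prop :=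
  LinearMap.adjoint P = P ∧ P ∘ₗ P = P

/-- A discrete observable (POVM) with finite outcome set `Ω`. -/
def IsPOVM {E : Type*} [NormedAddCommGroup E] [InnerProductSpace ℂ E]
    [FiniteDimensional ℂ E] {Ω : Type*} [Fintype Ω] (A : Ω → E →ₗ[ℂ] E) : Prop :=
  (∀ j, IsPosOp (A j)) ∧ ∑ j, A j = (1 : E →ₗ[ℂ] E)

/-- A projection-valued measure (PVM). -/
def IsPVM {E : Type*} [NormedAddCommGroup E] [InnerProductSpace ℂ E]
    [FiniteDimensional ℂ E] {Ω : Type*} [Fintype Ω] (P : Ω → E →ₗ[ℂ] E) : Prop :=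
  (∀ j, IsOrthoProj (P j)) ∧ ∑ j, P j = (1 : E →ₗ[ℂ] E)

/-- An isometry between inner product spaces: `J* J = 1`. -/
def IsIsometryOp {E F : Type*} [NormedAddCommGroup E] [InnerProductSpace ℂ E]
    [FiniteDimensional ℂ E] [NormedAddCommGroup F] [InnerProductSpace ℂ F]
    [FiniteDimensional ℂ F] (J : E →ₗ[ℂ] F) : Prop :=
  LinearMap.adjoint J ∘ₗ J = (1 : E →ₗ[ℂ] E)

/-- `(F, P, J)` is a Naimark dilation of the observable `A`. -/
def IsNaimark {E F : Type*} [NormedAddCommGroup E] [InnerProductSpace ℂ E]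
    [FiniteDimensional ℂ E] [NormedAddCommGroup F] [InnerProductSpace ℂ F]
    [FiniteDimensional ℂ F] {Ω : Type*} [Fintype Ω]
    (A : Ω → E →ₗ[ℂ] E) (P : Ω → F →ₗ[ℂ] F) (J : E →ₗ[ℂ] F) : Prop :=
  IsPVM P ∧ IsIsometryOp J ∧ ∀ j, A j = LinearMap.adjoint J ∘ₗ P j ∘ₗ J

/-- A minimal Naimark dilation: the vectors `P j (J φ)` span the dilation space. -/
def IsMinimalNaimark {E F : Type*} [NormedAddCommGroup E] [InnerProductSpace ℂ E]
    [FiniteDimensional ℂ E] [NormedAddCommGroup F] [InnerProductSpace ℂ F]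
    [FiniteDimensional ℂ F] {Ω : Type*} [Fintype Ω]
    (A : Ω → E →ₗ[ℂ] E) (P : Ω → F →ₗ[ℂ] F) (J : E →ₗ[ℂ] F) : Prop :=
  IsNaimark A P J ∧ Submodule.span ℂ {x : F | ∃ j φ, x = P j (J φ)} = ⊤

/-- The sandwich map `σ ↦ U ∘ σ ∘ V` as a linear map on operators. -/
def sandwich {E F : Type*} [NormedAddCommGroup E] [InnerProductSpace ℂ E]
    [NormedAddCommGroup F] [InnerProductSpace ℂ F]
    (U : E →ₗ[ℂ] F) (V : F →ₗ[ℂ] E) : (E →ₗ[ℂ] E) →ₗ[ℂ] (F →ₗ[ℂ] F) where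
  toFun σ := U ∘ₗ σ ∘ₗ V
  map_add' σ τ := by
    ext x; simp [LinearMap.add_comp, LinearMap.comp_add]
  map_smul' c σ := by
    ext x; simp

/-- The least disturbing channel `ρ ↦ ∑ j, P j J ρ J* P j` associated with
a Naimark dilation `(F, P, J)`. -/
def leastDisturbing {E F : Type*} [NormedAddCommGroup E] [InnerProductSpace ℂ E]
    [FiniteDimensional ℂ E] [NormedAddCommGroup F] [InnerProductSpace ℂ F]
    [FiniteDimensional ℂ F] {Ω : Type*} [Fintype Ω]
    (P : Ω → F →ₗ[ℂ] F) (J : E →ₗ[ℂ] F) : (E →ₗ[ℂ] E) →ₗ[ℂ] (F →ₗ[ℂ] F) :=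
  ∑ j, sandwich (P j ∘ₗ J) (LinearMap.adjoint J ∘ₗ P j)

/-- The Lüders channel `σ ↦ ∑ j, P j σ P j` of a PVM `P`. -/
def ludersChannel {F : Type*} [NormedAddCommGroup F] [InnerProductSpace ℂ F]
    {Ω : Type*} [Fintype Ω] (P : Ω → F →ₗ[ℂ] F) : (F →ₗ[ℂ] F) →ₗ[ℂ] (F →ₗ[ℂ] F) :=
  ∑ j, sandwich (P j) (P j)

/-- Complete positivity of a map on operators, expressed through the existence of
a Kraus decomposition (equivalent to complete positivity in finite dimension). -/
def IsCPMap {E F : Type*} [NormedAddCommGroup E] [InnerProductSpace ℂ E]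
    [FiniteDimensional ℂ E] [NormedAddCommGroup F] [InnerProductSpace ℂ F]
    [FiniteDimensional ℂ F] (Λ : (E →ₗ[ℂ] E) →ₗ[ℂ] (F →ₗ[ℂ] F)) : Prop :=
  ∃ (n : ℕ) (V : Fin n → (E →ₗ[ℂ] F)),
    ∀ ρ, Λ ρ = ∑ i, V i ∘ₗ ρ ∘ₗ LinearMap.adjoint (V i)

/-- A quantum channel: a completely positive trace-preserving linear map. -/
def IsChannel {E F : Type*} [NormedAddCommGroup E] [InnerProductSpace ℂ E]
    [FiniteDimensional ℂ E] [NormedAddCommGroup F] [InnerProductSpace ℂ F]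
    [FiniteDimensional ℂ F] (Λ : (E →ₗ[ℂ] E) →ₗ[ℂ] (F →ₗ[ℂ] F)) : Prop :=
  IsCPMap Λ ∧ ∀ ρ, LinearMap.trace ℂ F (Λ ρ) = LinearMap.trace ℂ E ρ

/-- `Λd` is the Heisenberg dual of `Λ`: `tr[Λ(ρ) B] = tr[ρ Λd(B)]` for all `ρ, B`. -/
def IsHeisenbergDual {E F : Type*} [NormedAddCommGroup E] [InnerProductSpace ℂ E]
    [FiniteDimensional ℂ E] [NormedAddCommGroup F] [InnerProductSpace ℂ F]
    [FiniteDimensional ℂ F] (Λ : (E →ₗ[ℂ] E) →ₗ[ℂ] (F →ₗ[ℂ] F))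
    (Λd : (F →ₗ[ℂ] F) →ₗ[ℂ] (E →ₗ[ℂ] E)) : Prop :=
  ∀ ρ B, LinearMap.trace ℂ F (Λ ρ ∘ₗ B) = LinearMap.trace ℂ E (ρ ∘ₗ Λd B)

/-- Channel post-processing: `Λ₀ ⪯ Λ` iff `Λ₀ = Γ ∘ Λ` for some channel `Γ`. -/
def ChanPP {E F G : Type*} [NormedAddCommGroup E] [InnerProductSpace ℂ E]
    [FiniteDimensional ℂ E] [NormedAddCommGroup F] [InnerProductSpace ℂ F]
    [FiniteDimensional ℂ F] [NormedAddCommGroup G] [InnerProductSpace ℂ G]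
    [FiniteDimensional ℂ G]
    (Λ₀ : (E →ₗ[ℂ] E) →ₗ[ℂ] (G →ₗ[ℂ] G)) (Λ : (E →ₗ[ℂ] E) →ₗ[ℂ] (F →ₗ[ℂ] F)) : Prop :=
  ∃ Γ : (F →ₗ[ℂ] F) →ₗ[ℂ] (G →ₗ[ℂ] G), IsChannel Γ ∧ Λ₀ = Γ ∘ₗ Λ

/-- Post-processing equivalence of channels. -/
def ChanEquiv {E F G : Type*} [NormedAddCommGroup E] [InnerProductSpace ℂ E]
    [FiniteDimensional ℂ E] [NormedAddCommGroup F] [InnerProductSpace ℂ F]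
    [FiniteDimensional ℂ F] [NormedAddCommGroup G] [InnerProductSpace ℂ G]
    [FiniteDimensional ℂ G]
    (Λ₀ : (E →ₗ[ℂ] E) →ₗ[ℂ] (G →ₗ[ℂ] G)) (Λ : (E →ₗ[ℂ] E) →ₗ[ℂ] (F →ₗ[ℂ] F)) : Prop :=
  ChanPP Λ₀ Λ ∧ ChanPP Λ Λ₀

/-- Observable post-processing: `B ⪯ A` via a stochastic matrix `p`. -/
def ObsPP {E : Type*} [NormedAddCommGroup E] [InnerProductSpace ℂ E]
    [FiniteDimensional ℂ E] {Ω₁ Ω₂ : Type*} [Fintype Ω₁] [Fintype Ω₂]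
    (B : Ω₂ → E →ₗ[ℂ] E) (A : Ω₁ → E →ₗ[ℂ] E) : Prop :=
  ∃ p : Ω₂ → Ω₁ → ℝ, (∀ k j, 0 ≤ p k j) ∧ (∀ j, ∑ k, p k j = 1) ∧
    ∀ k, B k = ∑ j, (p k j : ℂ) • A j

/-- Post-processing equivalence of observables. -/
def ObsEquiv {E : Type*} [NormedAddCommGroup E] [InnerProductSpace ℂ E]
    [FiniteDimensional ℂ E] {Ω₁ Ω₂ : Type*} [Fintype Ω₁] [Fintype Ω₂]
    (B : Ω₂ → E →ₗ[ℂ] E) (A : Ω₁ → E →ₗ[ℂ] E) : Prop :=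
  ObsPP B A ∧ ObsPP A B

/-- `B` is a relabeling of `A` (along some function `f` on outcomes). -/
def IsRelabeling {E : Type*} [NormedAddCommGroup E] [InnerProductSpace ℂ E]
    [FiniteDimensional ℂ E] {Ω₁ Ω₂ : Type*} [Fintype Ω₁] [Fintype Ω₂] [DecidableEq Ω₂]
    (B : Ω₂ → E →ₗ[ℂ] E) (A : Ω₁ → E →ₗ[ℂ] E) : Prop :=
  ∃ f : Ω₁ → Ω₂, ∀ k, B k = ∑ j ∈ Finset.univ.filter (fun j => f j = k), A j

/-- A minimally sufficient observable: every observable post-processing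
equivalent to it is a refinement of it (i.e. it is a relabeling of every such observable). -/
def MinSufficient {E : Type*} [NormedAddCommGroup E] [InnerProductSpace ℂ E]
    [FiniteDimensional ℂ E] {Ω : Type*} [Fintype Ω] [DecidableEq Ω]
    (A : Ω → E →ₗ[ℂ] E) : Prop :=
  ∀ (Ω' : Type) (_ : Fintype Ω') (B : Ω' → E →ₗ[ℂ] E),
    IsPOVM B → ObsEquiv B A → IsRelabeling A B

/-- Compatibility of an observable `A` and a channel `Λ`: there is an instrument
with the outcome statistics of `A` whose total channel is `Λ`. -/
def CompatObsChan {E F : Type*} [NormedAddCommGroup E] [InnerProductSpace ℂ E]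
    [FiniteDimensional ℂ E] [NormedAddCommGroup F] [InnerProductSpace ℂ F]
    [FiniteDimensional ℂ F] {Ω : Type*} [Fintype Ω]
    (A : Ω → E →ₗ[ℂ] E) (Λ : (E →ₗ[ℂ] E) →ₗ[ℂ] (F →ₗ[ℂ] F)) : Prop :=
  ∃ I : Ω → ((E →ₗ[ℂ] E) →ₗ[ℂ] (F →ₗ[ℂ] F)),
    (∀ j, IsCPMap (I j)) ∧
    (∀ j ρ, LinearMap.trace ℂ F (I j ρ) = LinearMap.trace ℂ E (ρ ∘ₗ A j)) ∧
    ∑ j, I j = Λ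

/-- Joint measurability (compatibility) of two observables. -/
def JointlyMeasurable {E : Type*} [NormedAddCommGroup E] [InnerProductSpace ℂ E]
    [FiniteDimensional ℂ E] {Ω₁ Ω₂ : Type*} [Fintype Ω₁] [Fintype Ω₂]
    (A : Ω₁ → E →ₗ[ℂ] E) (B : Ω₂ → E →ₗ[ℂ] E) : Prop :=
  ∃ G : Ω₁ × Ω₂ → E →ₗ[ℂ] E, IsPOVM G ∧
    (∀ j, A j = ∑ k, G (j, k)) ∧ (∀ k, B k = ∑ j, G (j, k))

/-- An extreme observable: an extreme point of the convex set of observables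
with the given outcome set. -/
def IsExtremeObs {E : Type*} [NormedAddCommGroup E] [InnerProductSpace ℂ E]
    [FiniteDimensional ℂ E] {Ω : Type*} [Fintype Ω] (A : Ω → E →ₗ[ℂ] E) : Prop :=
  IsPOVM A ∧ ∀ (B₁ B₂ : Ω → E →ₗ[ℂ] E) (t : ℝ), IsPOVM B₁ → IsPOVM B₂ →
    0 < t → t < 1 → (∀ j, A j = (t : ℂ) • B₁ j + ((1 - t : ℝ) : ℂ) • B₂ j) →
    (B₁ = A ∧ B₂ = A)

/-- `|x⟩⟨y|` : the rank-one operator `z ↦ ⟨y, z⟩ x`. -/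
def outer {E : Type*} [NormedAddCommGroup E] [InnerProductSpace ℂ E] (x y : E) :
    E →ₗ[ℂ] E where
  toFun z := (inner ℂ y z : ℂ) • x
  map_add' z w := by simp [inner_add_right, add_smul]
  map_smul' c z := by simp [inner_smul_right, smul_smul]

/-- Loewner order on operators: `S ≤ T` iff `T - S` is positive semidefinite. -/
def LoewnerLE {E : Type*} [NormedAddCommGroup E] [InnerProductSpace ℂ E]
    [FiniteDimensional ℂ E] (S T : E →ₗ[ℂ] E) : Prop :=
  IsPosOp (T - S)

/-- Compression of an operator `T` on `F` to a subspace `S`: `P_S ∘ T ∘ incl_S`. -/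
def compressTo {F : Type*} [NormedAddCommGroup F] [InnerProductSpace ℂ F]
    [FiniteDimensional ℂ F] (S : Submodule ℂ F) (T : F →ₗ[ℂ] F) : ↥S →ₗ[ℂ] ↥S :=
  have := FiniteDimensional.complete ℂ ↥S
  (S.orthogonalProjectionOnto).toLinearMap ∘ₗ T ∘ₗ S.subtype

end

/-!
Write the channel in Kraus form `Λ ρ = ∑ Vᵢ ρ Vᵢ*`, so that `Λ* B = ∑ Vᵢ* B Vᵢ` and
`∑ Vᵢ* Vᵢ = 1`. For positive `W` we have `⟪Λ* W x, x⟫ = ∑ ⟪W Vᵢ x, Vᵢ x⟫`, so `Λ* W = 0` forces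
`W` to vanish on the span `M` of the ranges of the `Vᵢ`. Applied to `W = 1 - Q`, this shows that
a projection `Q` satisfies `Λ* Q = 1` iff its range contains `M`; hence the support projection is
the orthogonal projection `R` onto `M`, and (i), (ii) follow from `R Vᵢ = Vᵢ`. For (iii), with
`P = Λ* E` a projection, `E` kills `Vᵢ (1 - P) x` and `1 - E` kills `Vᵢ P x`, so `E Vᵢ = Vᵢ P`:
`E` leaves `M` invariant and is idempotent on it.
-/

open scoped InnerProductSpace
open LinearMap

section Operators

variable {𝕜 E : Type*} [RCLike 𝕜] [NormedAddCommGroup E] [InnerProductSpace 𝕜 E]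

theorem LinearMap.IsPositive.apply_eq_zero_of_inner_self {T : E →ₗ[𝕜] E} (hT : T.IsPositive)
    {x : E} (hx : ⟪T x, x⟫_𝕜 = 0) : T x = 0 := by
  -- Cauchy–Schwarz for the semi-inner product `⟪x, T y⟫`
  let c : PreInnerProductSpace.Core 𝕜 E :=
    { inner x y := ⟪x, T y⟫_𝕜
      conj_inner_symm x y := by simp [hT.isSymmetric x y]
      re_inner_nonneg := hT.re_inner_nonneg_right
      add_left x y z := inner_add_left x y (T z)
      smul_left x y r := inner_smul_left x (T y) r }
  have h := @InnerProductSpace.Core.inner_mul_inner_self_le 𝕜 E _ _ _ c (T x) x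
  change ‖⟪T x, T x⟫_𝕜‖ * ‖⟪x, T (T x)⟫_𝕜‖ ≤ RCLike.re ⟪T x, T (T x)⟫_𝕜 * RCLike.re ⟪x, T x⟫_𝕜 at h
  rw [← hT.isSymmetric x (T x), ← hT.isSymmetric x x, hx, map_zero, mul_zero] at h
  exact inner_self_eq_zero.mp <| norm_eq_zero.mp <| mul_self_eq_zero.mp <|
    le_antisymm h (by positivity)

theorem LinearMap.ext_of_trace_comp_eq [FiniteDimensional 𝕜 E] {S T : E →ₗ[𝕜] E}
    (h : ∀ ρ : E →ₗ[𝕜] E, trace 𝕜 E (ρ ∘ₗ S) = trace 𝕜 E (ρ ∘ₗ T)) : S = T := by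
  ext x
  refine ext_inner_left 𝕜 fun y => ?_
  have htrace : ∀ A : E →ₗ[𝕜] E, trace 𝕜 E ((InnerProductSpace.rankOne 𝕜 x y : E →L[𝕜] E) ∘ₗ A)
      = ⟪y, A x⟫_𝕜 := by
    intro A
    have hcomp : A ∘ₗ (InnerProductSpace.rankOne 𝕜 x y : E →L[𝕜] E)
        = ((InnerProductSpace.rankOne 𝕜 (A x) y : E →L[𝕜] E) : E →ₗ[𝕜] E) := by
      ext z
      simp [InnerProductSpace.rankOne_apply]
    rw [trace_comp_comm', hcomp, InnerProductSpace.trace_rankOne]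
  simpa [htrace] using h (InnerProductSpace.rankOne 𝕜 x y)

end Operators

theorem IsStarProjection.mul_mul_and_commute {A : Type*} [Ring A] [StarRing A] {r e : A}
    (hr : IsStarProjection r) (he : IsSelfAdjoint e) (hinv : e * r = r * (e * r))
    (hidem : e * (e * r) = e * r) : IsStarProjection (r * (e * r)) ∧ Commute r e := by
  have hcomm : r * e = e * r := by
    have h := congrArg star hinv
    simp only [star_mul, hr.isSelfAdjoint.star_eq, he.star_eq] at h
    rw [h, mul_assoc, ← hinv]
  refine ⟨hinv ▸ ⟨?_, ?_⟩, hcomm⟩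
  · calc e * r * (e * r) = e * (e * r) * r := by rw [mul_assoc, ← mul_assoc r, hcomm]; noncomm_ring
      _ = e * r := by rw [hidem, mul_assoc, hr.isIdempotentElem.eq]
  · rw [IsSelfAdjoint, star_mul, hr.isSelfAdjoint.star_eq, he.star_eq, hcomm]

section

variable {E : Type*} [NormedAddCommGroup E] [InnerProductSpace ℂ E] [FiniteDimensional ℂ E]

theorem isPosOp_iff_isPositive {T : E →ₗ[ℂ] E} : IsPosOp T ↔ T.IsPositive := by
  rw [IsPosOp, isPositive_iff, isSymmetric_iff_isSelfAdjoint, IsSelfAdjoint, star_eq_adjoint]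

theorem isOrthoProj_iff_isStarProjection {P : E →ₗ[ℂ] E} : IsOrthoProj P ↔ IsStarProjection P := by
  rw [IsOrthoProj, isStarProjection_iff, IsSelfAdjoint, star_eq_adjoint, and_comm]
  rfl

theorem loewnerLE_iff_le {S T : E →ₗ[ℂ] E} : LoewnerLE S T ↔ S ≤ T :=
  isPosOp_iff_isPositive

end

noncomputable section Kraus

variable {H K ι : Type*} [NormedAddCommGroup H] [InnerProductSpace ℂ H]
    [NormedAddCommGroup K] [InnerProductSpace ℂ K] [FiniteDimensional ℂ K]

def krausSupport (V : ι → H →ₗ[ℂ] K) : Submodule ℂ K :=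
  ⨆ i, range (V i)

def supportProj (V : ι → H →ₗ[ℂ] K) : K →ₗ[ℂ] K :=
  (krausSupport V).starProjection

variable {V : ι → H →ₗ[ℂ] K}

theorem isStarProjection_supportProj : IsStarProjection (supportProj V) :=
  isStarProjection_iff_isSymmetricProjection.2 (Submodule.isSymmetricProjection_starProjection _)

theorem range_supportProj : range (supportProj V) = krausSupport V :=
  Submodule.range_starProjection _

theorem supportProj_comp_kraus (i : ι) : supportProj V ∘ₗ V i = V i := by
  rw [isStarProjection_supportProj.isIdempotentElem.comp_eq_right_iff, range_supportProj]
  exact le_iSup (fun i => range (V i)) i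

theorem comp_supportProj_eq_iff {G : Type*} [AddCommGroup G] [Module ℂ G] {B C : K →ₗ[ℂ] G} :
    B ∘ₗ supportProj V = C ∘ₗ supportProj V ↔ ∀ i, B ∘ₗ V i = C ∘ₗ V i := by
  rw [← sub_eq_zero, ← sub_comp, ← range_le_ker_iff, range_supportProj, krausSupport, iSup_le_iff]
  simp_rw [range_le_ker_iff, sub_comp, sub_eq_zero]

variable [FiniteDimensional ℂ H]

theorem adjoint_kraus_comp_supportProj (i : ι) :
    adjoint (V i) ∘ₗ supportProj V = adjoint (V i) := by
  conv_rhs => rw [← supportProj_comp_kraus (V := V) i, adjoint_comp, ← star_eq_adjoint,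
    isStarProjection_supportProj.isSelfAdjoint.star_eq]

variable [Fintype ι]

def krausDual (V : ι → H →ₗ[ℂ] K) : (K →ₗ[ℂ] K) →ₗ[ℂ] (H →ₗ[ℂ] H) :=
  ∑ i, sandwich (adjoint (V i)) (V i)

theorem krausDual_apply (B : K →ₗ[ℂ] K) :
    krausDual V B = ∑ i, adjoint (V i) ∘ₗ B ∘ₗ V i := by
  simp [krausDual, sandwich]

theorem IsHeisenbergDual.eq_krausDual {Λ : (H →ₗ[ℂ] H) →ₗ[ℂ] (K →ₗ[ℂ] K)}
    {Λd : (K →ₗ[ℂ] K) →ₗ[ℂ] (H →ₗ[ℂ] H)}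
    (hΛ : ∀ ρ, Λ ρ = ∑ i, V i ∘ₗ ρ ∘ₗ adjoint (V i)) (hΛd : IsHeisenbergDual Λ Λd) :
    Λd = krausDual V := by
  ext B : 1
  refine ext_of_trace_comp_eq fun ρ => ?_
  rw [← hΛd, hΛ, krausDual_apply]
  simp only [← Module.End.mul_eq_comp, Finset.sum_mul, Finset.mul_sum, map_sum]
  exact Finset.sum_congr rfl fun i _ => (trace_comp_comm' (V i) (ρ ∘ₗ adjoint (V i) ∘ₗ B)).symm

theorem IsHeisenbergDual.map_one {Λ : (H →ₗ[ℂ] H) →ₗ[ℂ] (K →ₗ[ℂ] K)}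
    {Λd : (K →ₗ[ℂ] K) →ₗ[ℂ] (H →ₗ[ℂ] H)} (htr : ∀ ρ, trace ℂ K (Λ ρ) = trace ℂ H ρ)
    (hΛd : IsHeisenbergDual Λ Λd) : Λd 1 = 1 :=
  ext_of_trace_comp_eq fun ρ => by
    simpa [Module.End.one_eq_id, htr] using (hΛd ρ 1).symm

theorem krausDual_comp_supportProj (B : K →ₗ[ℂ] K) :
    krausDual V (B ∘ₗ supportProj V) = krausDual V B := by
  simp_rw [krausDual_apply, comp_assoc, supportProj_comp_kraus]

theorem krausDual_supportProj_comp (B : K →ₗ[ℂ] K) :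
    krausDual V (supportProj V ∘ₗ B) = krausDual V B := by
  simp_rw [krausDual_apply, ← comp_assoc, adjoint_kraus_comp_supportProj]

end Kraus

section SupportProjection

variable {H K ι : Type*} [NormedAddCommGroup H] [InnerProductSpace ℂ H] [FiniteDimensional ℂ H]
    [NormedAddCommGroup K] [InnerProductSpace ℂ K] [FiniteDimensional ℂ K] [Fintype ι]
    {V : ι → H →ₗ[ℂ] K}

theorem inner_krausDual_apply_self (B : K →ₗ[ℂ] K) (x : H) :
    ⟪krausDual V B x, x⟫_ℂ = ∑ i, ⟪B (V i x), V i x⟫_ℂ := by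
  simp [krausDual_apply, adjoint_inner_left]

theorem apply_kraus_eq_zero_of_inner_eq_zero {W : K →ₗ[ℂ] K} (hW : W.IsPositive) {x : H}
    (hx : ⟪krausDual V W x, x⟫_ℂ = 0) (i : ι) : W (V i x) = 0 := by
  rw [inner_krausDual_apply_self, Finset.sum_eq_zero_iff_of_nonneg
    fun j _ => hW.inner_nonneg_left (V j x)] at hx
  exact hW.apply_eq_zero_of_inner_self (hx i (Finset.mem_univ i))

theorem comp_kraus_eq_zero_of_krausDual_eq_zero {W : K →ₗ[ℂ] K} (hW : W.IsPositive)
    (h : krausDual V W = 0) (i : ι) : W ∘ₗ V i = 0 :=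
  ext fun x => apply_kraus_eq_zero_of_inner_eq_zero hW (by simp [h]) i

theorem krausDual_eq_one_iff (hV : krausDual V 1 = 1) {Q : K →ₗ[ℂ] K}
    (hQ : IsStarProjection Q) : krausDual V Q = 1 ↔ krausSupport V ≤ range Q := by
  rw [← range_supportProj, ← hQ.isIdempotentElem.comp_eq_right_iff]
  constructor
  · intro h
    have h1 := comp_kraus_eq_zero_of_krausDual_eq_zero (V := V) (W := 1 - Q)
      (isStarProjection_iff_isSymmetricProjection.1 hQ.one_sub).isPositive
      (by rw [map_sub, h, hV, sub_self])
    simpa using (comp_supportProj_eq_iff (C := LinearMap.id)).2 fun i => by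
      rw [eq_comm, ← sub_eq_zero, ← sub_comp]
      exact h1 i
  · intro h
    rw [← hV, ← krausDual_comp_supportProj Q, h, ← krausDual_comp_supportProj 1]
    rfl

def IsSupportProjection (Φ : (K →ₗ[ℂ] K) →ₗ[ℂ] (H →ₗ[ℂ] H)) (R : K →ₗ[ℂ] K) : Prop :=
  IsOrthoProj R ∧ Φ R = 1 ∧ ∀ Q, IsOrthoProj Q → LoewnerLE Q R → Φ Q = 1 → Q = R

theorem isSupportProjection_krausDual_iff (hV : krausDual V 1 = 1) {R : K →ₗ[ℂ] K} :
    IsSupportProjection (krausDual V) R ↔ R = supportProj V := by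
  have hP := isStarProjection_supportProj (V := V)
  have hP' := isStarProjection_iff_isSymmetricProjection.1 hP
  simp only [IsSupportProjection, isOrthoProj_iff_isStarProjection, loewnerLE_iff_le]
  constructor
  · rintro ⟨hR, hR1, hmin⟩
    refine (hmin _ hP ?_ ((krausDual_eq_one_iff hV hP).2 range_supportProj.ge)).symm
    rw [hP'.le_iff_range_le_range (isStarProjection_iff_isSymmetricProjection.1 hR),
      range_supportProj, ← krausDual_eq_one_iff hV hR, hR1]
  · rintro rfl
    refine ⟨hP, (krausDual_eq_one_iff hV hP).2 range_supportProj.ge, fun Q hQ hle hQ1 => ?_⟩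
    have hQ' := isStarProjection_iff_isSymmetricProjection.1 hQ
    rw [hQ'.le_iff_range_le_range hP'] at hle
    rw [krausDual_eq_one_iff hV hQ, ← range_supportProj] at hQ1
    exact (hQ'.ext_iff hP').2 (le_antisymm hle hQ1)

theorem comp_kraus_eq_kraus_comp_of_isStarProjection (hV : krausDual V 1 = 1) {E : K →ₗ[ℂ] K}
    (hE : E.IsPositive) (hE1 : (1 - E).IsPositive) (hP : IsStarProjection (krausDual V E))
    (i : ι) : E ∘ₗ V i = V i ∘ₗ krausDual V E := by
  set P := krausDual V E
  have hPP : ∀ x, P (P x) = P x := LinearMap.congr_fun hP.isIdempotentElem.eq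
  ext x
  have h₀ : E (V i (x - P x)) = 0 := apply_kraus_eq_zero_of_inner_eq_zero hE
    (show ⟪P (x - P x), x - P x⟫_ℂ = 0 by rw [map_sub, hPP, sub_self, inner_zero_left]) i
  have h₁ : (1 - E) (V i (P x)) = 0 := apply_kraus_eq_zero_of_inner_eq_zero hE1
    (by rw [map_sub, hV, LinearMap.sub_apply, Module.End.one_apply, hPP, sub_self,
      inner_zero_left]) i
  rw [map_sub, map_sub, sub_eq_zero] at h₀
  rw [LinearMap.sub_apply, Module.End.one_apply, sub_eq_zero] at h₁
  rw [comp_apply, comp_apply, h₀, ← h₁]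

theorem isStarProjection_supportProj_conj (hV : krausDual V 1 = 1) {E : K →ₗ[ℂ] K}
    (hE : E.IsPositive) (hE1 : (1 - E).IsPositive) (hP : IsStarProjection (krausDual V E)) :
    IsStarProjection (supportProj V * (E * supportProj V)) ∧ Commute (supportProj V) E := by
  have hEV := comp_kraus_eq_kraus_comp_of_isStarProjection hV hE hE1 hP
  refine isStarProjection_supportProj.mul_mul_and_commute hE.isSelfAdjoint ?_ ?_
  · refine (comp_supportProj_eq_iff (C := supportProj V ∘ₗ E)).2 fun i => ?_
    rw [comp_assoc, hEV, ← comp_assoc, supportProj_comp_kraus]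
  · refine (comp_supportProj_eq_iff (B := E ∘ₗ E)).2 fun i => ?_
    rw [comp_assoc, hEV, ← comp_assoc, hEV, comp_assoc, ← Module.End.mul_eq_comp (krausDual V E),
      hP.isIdempotentElem.eq]

end SupportProjection

/-- Existence and uniqueness of the support projection of a channel,
together with its basic properties (i)-(iii). -/
theorem stmt_7 {H K : Type*}
    [NormedAddCommGroup H] [InnerProductSpace ℂ H] [FiniteDimensional ℂ H]
    [NormedAddCommGroup K] [InnerProductSpace ℂ K] [FiniteDimensional ℂ K]
    (Λ : (H →ₗ[ℂ] H) →ₗ[ℂ] (K →ₗ[ℂ] K)) (hΛ : IsChannel Λ)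
    (Λd : (K →ₗ[ℂ] K) →ₗ[ℂ] (H →ₗ[ℂ] H)) (hΛd : IsHeisenbergDual Λ Λd) :
    (∃! R : K →ₗ[ℂ] K, IsOrthoProj R ∧ Λd R = (1 : H →ₗ[ℂ] H) ∧
      ∀ Q : K →ₗ[ℂ] K, IsOrthoProj Q → LoewnerLE Q R → Λd Q = (1 : H →ₗ[ℂ] H) → Q = R) ∧
    ∀ R : K →ₗ[ℂ] K,
      (IsOrthoProj R ∧ Λd R = (1 : H →ₗ[ℂ] H) ∧
        ∀ Q : K →ₗ[ℂ] K, IsOrthoProj Q → LoewnerLE Q R → Λd Q = (1 : H →ₗ[ℂ] H) → Q = R) →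
      ((∀ B : K →ₗ[ℂ] K,
          Λd B = Λd (R ∘ₗ B) ∧ Λd B = Λd (B ∘ₗ R) ∧ Λd B = Λd (R ∘ₗ B ∘ₗ R)) ∧
       (∀ E₀ : K →ₗ[ℂ] K, IsPosOp E₀ → Λd E₀ = 0 → R ∘ₗ E₀ ∘ₗ R = 0) ∧
       (∀ E₀ : K →ₗ[ℂ] K, IsPosOp E₀ → IsPosOp ((1 : K →ₗ[ℂ] K) - E₀) →
          IsOrthoProj (Λd E₀) →
          IsOrthoProj (R ∘ₗ E₀ ∘ₗ R) ∧ R ∘ₗ E₀ = E₀ ∘ₗ R)) := by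
  obtain ⟨⟨n, V, hV⟩, htr⟩ := hΛ
  have hV1 : krausDual V 1 = 1 := hΛd.eq_krausDual hV ▸ hΛd.map_one htr
  obtain rfl := hΛd.eq_krausDual hV
  have hsupp := fun R => isSupportProjection_krausDual_iff (R := R) hV1
  refine ⟨⟨supportProj V, (hsupp _).2 rfl, fun R hR => (hsupp R).1 hR⟩, fun R hR => ?_⟩
  obtain rfl := (hsupp R).1 hR
  refine ⟨fun B => ⟨?_, ?_, ?_⟩, fun E hE hE0 => ?_, fun E hE hE1 hP => ?_⟩
  · exact (krausDual_supportProj_comp B).symm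
  · exact (krausDual_comp_supportProj B).symm
  · rw [krausDual_supportProj_comp, krausDual_comp_supportProj]
  · have h := (comp_supportProj_eq_iff (C := 0)).2
      (comp_kraus_eq_zero_of_krausDual_eq_zero (isPosOp_iff_isPositive.1 hE) hE0)
    rw [h, zero_comp, comp_zero]
  · rw [isPosOp_iff_isPositive] at hE hE1
    rw [isOrthoProj_iff_isStarProjection] at hP ⊢
    exact isStarProjection_supportProj_conj hV1 hE hE1 hP
end

section
/- Let Ã : Ω → L(H) be a non-vanishing observable (Ã(k) ≠ 0 for all k) on a finite-dimensional complex Hilbert space H. Then ∑_{k∈Ω} rank Ã(k) ≥ dim H, with equality if and only if every Ã(k) is an orthogonal projection (i.e., Ã is sharp). -/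
/-!
Taking traces in `∑ₖ Ã(k) = 1` gives `∑ₖ tr Ã(k) = dim H`. Each `Ã(k)` satisfies `0 ≤ Ã(k) ≤ 1`,
so its eigenvalues lie in `[0, 1]`, and `tr Ã(k)` (the sum of the eigenvalues) is at most
`rank Ã(k)` (the number of nonzero eigenvalues), with equality exactly when every eigenvalue is
`0` or `1`, i.e. when `Ã(k)` is idempotent.
-/

open scoped ComplexOrder

open Finset

namespace LinearMap

variable {𝕜 E : Type*} [RCLike 𝕜] [NormedAddCommGroup E] [InnerProductSpace 𝕜 E]
  {T : E →ₗ[𝕜] E}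

theorem isSymmetric_of_le_one (h1 : T ≤ 1) : T.IsSymmetric := by
  simpa [← Module.End.one_eq_id] using IsSymmetric.id.sub h1.isSymmetric

variable [FiniteDimensional 𝕜 E] {n : ℕ}

namespace IsSymmetric

theorem finrank_range_eq_card_eigenvalues_ne_zero (hT : T.IsSymmetric)
    (hn : Module.finrank 𝕜 E = n) :
    Module.finrank 𝕜 (range T) = #{i | hT.eigenvalues hn i ≠ 0} := by
  have hker := hT.card_filter_eigenvalues_eq hn 0
  rw [Module.End.eigenspace_zero] at hker
  have hsplit := card_filter_add_card_filter_not (s := univ)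
    (fun i => (hT.eigenvalues hn i : 𝕜) = 0)
  have := T.finrank_range_add_finrank_ker
  simp only [RCLike.ofReal_eq_zero, card_univ, Fintype.card_fin] at hker hsplit
  simp only [ne_eq]
  omega

theorem isIdempotentElem_iff (hT : T.IsSymmetric) (hn : Module.finrank 𝕜 E = n) :
    IsIdempotentElem T ↔ ∀ i, hT.eigenvalues hn i = 0 ∨ hT.eigenvalues hn i = 1 := by
  set b := hT.eigenvectorBasis hn
  have hsq : ∀ i, (T * T) (b i) = ((hT.eigenvalues hn i ^ 2 : ℝ) : 𝕜) • b i := by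
    intro i
    simp [b, Module.End.mul_apply, hT.apply_eigenvectorBasis, smul_smul, sq]
  have key : ∀ i, (T * T) (b i) = T (b i) ↔
      hT.eigenvalues hn i ^ 2 = hT.eigenvalues hn i := by
    intro i
    rw [hsq, hT.apply_eigenvectorBasis, (smul_left_injective 𝕜 (b.orthonormal.ne_zero i)).eq_iff,
      RCLike.ofReal_inj]
  refine ⟨fun h i => eq_zero_or_one_of_sq_eq_self ((key i).1 (by rw [h.eq])), fun h => ?_⟩
  refine b.toBasis.ext fun i => ?_
  rw [OrthonormalBasis.coe_toBasis, key]
  rcases h i with h0 | h1 <;> simp [*]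

theorem eigenvalues_le_one (hT : T.IsSymmetric) (hn : Module.finrank 𝕜 E = n) (h1 : T ≤ 1)
    (i : Fin n) : hT.eigenvalues hn i ≤ 1 := by
  simpa [hT.apply_eigenvectorBasis, inner_sub_left, inner_smul_real_left,
    inner_self_eq_norm_sq, RCLike.smul_re] using h1.2 (hT.eigenvectorBasis hn i)

end IsSymmetric

theorem re_trace_le_finrank_range (h1 : T ≤ 1) :
    RCLike.re (trace 𝕜 E T) ≤ Module.finrank 𝕜 (range T) := by
  have hT := isSymmetric_of_le_one h1
  rw [hT.re_trace_eq_sum_eigenvalues rfl, hT.finrank_range_eq_card_eigenvalues_ne_zero rfl,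
    natCast_card_filter]
  refine sum_le_sum fun i _ => ?_
  have := hT.eigenvalues_le_one rfl h1 i
  split_ifs <;> simp_all

theorem re_trace_eq_finrank_range_iff (h1 : T ≤ 1) :
    RCLike.re (trace 𝕜 E T) = Module.finrank 𝕜 (range T) ↔ IsIdempotentElem T := by
  have hT := isSymmetric_of_le_one h1
  rw [hT.re_trace_eq_sum_eigenvalues rfl, hT.finrank_range_eq_card_eigenvalues_ne_zero rfl,
    natCast_card_filter, sum_eq_sum_iff_of_le, hT.isIdempotentElem_iff rfl]
  · refine forall_congr' fun i => ?_
    split_ifs <;> simp_all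
  · intro i _
    have := hT.eigenvalues_le_one rfl h1 i
    split_ifs <;> simp_all

end LinearMap

section POVM

variable {H : Type*} [NormedAddCommGroup H] [InnerProductSpace ℂ H] [FiniteDimensional ℂ H]

theorem IsPosOp.isPositive {T : H →ₗ[ℂ] H} (hT : IsPosOp T) : T.IsPositive :=
  T.isPositive_iff.2 ⟨(T.isSymmetric_iff_isSelfAdjoint).2 hT.1, hT.2⟩

variable {Ω : Type*} [Fintype Ω] {A : Ω → H →ₗ[ℂ] H}

theorem IsPOVM.le_one (hA : IsPOVM A) (k : Ω) : A k ≤ 1 :=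
  hA.2 ▸ single_le_sum (fun j _ => (LinearMap.nonneg_iff_isPositive _).2 (hA.1 j).isPositive)
    (mem_univ k)

theorem IsPOVM.sum_re_trace (hA : IsPOVM A) :
    ∑ k, RCLike.re (LinearMap.trace ℂ H (A k)) = Module.finrank ℂ H := by
  rw [← map_sum, ← map_sum, hA.2, LinearMap.trace_one, RCLike.natCast_re]

end POVM

theorem stmt_12_general {H : Type*}
    [NormedAddCommGroup H] [InnerProductSpace ℂ H] [FiniteDimensional ℂ H]
    {Ω : Type*} [Fintype Ω]
    (A : Ω → H →ₗ[ℂ] H) (hA : IsPOVM A) :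
    Module.finrank ℂ H ≤ ∑ k, Module.finrank ℂ ↥(LinearMap.range (A k)) ∧
    ((∑ k, Module.finrank ℂ ↥(LinearMap.range (A k)) = Module.finrank ℂ H) ↔
      ∀ k, IsOrthoProj (A k)) := by
  have hle k := LinearMap.re_trace_le_finrank_range (hA.le_one k)
  have htr := hA.sum_re_trace
  constructor
  · exact_mod_cast htr ▸ sum_le_sum fun k _ => hle k
  · rw [← Nat.cast_inj (R := ℝ), Nat.cast_sum, ← htr, eq_comm,
      sum_eq_sum_iff_of_le fun k _ => hle k]
    simp only [mem_univ, true_imp_iff, LinearMap.re_trace_eq_finrank_range_iff (hA.le_one _)]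
    exact forall_congr' fun k => ⟨fun h => ⟨(hA.1 k).1, h⟩, And.right⟩

/-- For a non-vanishing observable `Ã` on `H`,
`∑ₖ rank Ã(k) ≥ dim H`, with equality iff every `Ã(k)` is an orthogonal projection. -/
theorem stmt_12 {H : Type*}
    [NormedAddCommGroup H] [InnerProductSpace ℂ H] [FiniteDimensional ℂ H]
    {Ω : Type*} [Fintype Ω]
    (A : Ω → H →ₗ[ℂ] H) (hA : IsPOVM A) (hnv : ∀ k, A k ≠ 0) :
    Module.finrank ℂ H ≤ ∑ k, Module.finrank ℂ ↥(LinearMap.range (A k)) ∧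
    ((∑ k, Module.finrank ℂ ↥(LinearMap.range (A k)) = Module.finrank ℂ H) ↔
      ∀ k, IsOrthoProj (A k)) :=
  stmt_12_general A hA
end

section
/- Let A : Ω → L(H) be a non-vanishing extreme observable on a finite-dimensional complex Hilbert space H with finite outcome set Ω. Then A is minimally sufficient, i.e., every observable post-processing equivalent to A is a refinement of A. -/
open scoped ComplexOrder

/-!
If `B ≃ A` through stochastic matrices `p` and `q`, then `A j = ∑ j', (q p)_{j j'} A j'` with
nonnegative coefficients, so `A j` dominates `(q p)_{j j'} A j'`. For an extreme `A` with `j ≠ j'`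
this forces `A j' = 0`: otherwise moving a small multiple of `A j'` from outcome `j` to outcome `j'`
and back gives two observables with midpoint `A`. Hence `q p` is diagonal, so each row of `p`
is supported at any `f k` with `q (f k) k ≠ 0`, and `A` is the relabeling of `B` along `f`.
-/

section

variable {E : Type*} [NormedAddCommGroup E] [InnerProductSpace ℂ E] [FiniteDimensional ℂ E]

lemma IsPosOp.add {S T : E →ₗ[ℂ] E} (hS : IsPosOp S) (hT : IsPosOp T) : IsPosOp (S + T) := by
  refine ⟨by rw [map_add, hS.1, hT.1], fun x => ?_⟩
  simpa only [LinearMap.add_apply, inner_add_left] using add_nonneg (hS.2 x) (hT.2 x)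

lemma IsPosOp.ofReal_smul {T : E →ₗ[ℂ] E} (hT : IsPosOp T) {c : ℝ} (hc : 0 ≤ c) :
    IsPosOp ((c : ℂ) • T) := by
  refine ⟨by rw [map_smulₛₗ, hT.1, Complex.conj_ofReal], fun x => ?_⟩
  rw [LinearMap.smul_apply, inner_smul_left, Complex.conj_ofReal]
  exact mul_nonneg (by exact_mod_cast hc) (hT.2 x)

lemma IsPosOp.sum {ι : Type*} {s : Finset ι} {T : ι → E →ₗ[ℂ] E}
    (h : ∀ i ∈ s, IsPosOp (T i)) : IsPosOp (∑ i ∈ s, T i) := by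
  refine ⟨by rw [map_sum]; exact Finset.sum_congr rfl fun i hi => (h i hi).1, fun x => ?_⟩
  rw [LinearMap.sum_apply, sum_inner]
  exact Finset.sum_nonneg fun i hi => (h i hi).2 x

variable {Ω : Type*} [Fintype Ω] {A : Ω → E →ₗ[ℂ] E}

lemma IsExtremeObs.eq_zero_of_isPosOp_add_of_isPosOp_sub (hA : IsExtremeObs A)
    {D : Ω → E →ₗ[ℂ] E} (hD : ∑ i, D i = 0) (hadd : ∀ i, IsPosOp (A i + D i))
    (hsub : ∀ i, IsPosOp (A i - D i)) : D = 0 := by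
  have hsum_add : ∑ i, (A i + D i) = 1 := by rw [Finset.sum_add_distrib, hA.1.2, hD, add_zero]
  have hsum_sub : ∑ i, (A i - D i) = 1 := by rw [Finset.sum_sub_distrib, hA.1.2, hD, sub_zero]
  obtain ⟨hmid, -⟩ := hA.2 (fun i => A i + D i) (fun i => A i - D i) (1 / 2)
    ⟨hadd, hsum_add⟩ ⟨hsub, hsum_sub⟩ (by norm_num) (by norm_num) fun i => by push_cast; module
  funext i
  simpa using congrFun hmid i

lemma IsExtremeObs.eq_zero_of_smul_le [DecidableEq Ω] (hA : IsExtremeObs A) {j j' : Ω}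
    (hne : j ≠ j') {c : ℝ} (hc : 0 < c) (hle : LoewnerLE ((c : ℂ) • A j') (A j)) :
    A j' = 0 := by
  set ε := min c 1
  have hε : 0 < ε := lt_min hc one_pos
  have hAj' := hA.1.1 j'
  set D : Ω → E →ₗ[ℂ] E := Pi.single j' ((ε : ℂ) • A j') - Pi.single j ((ε : ℂ) • A j')
  have hD : D = 0 := by
    refine hA.eq_zero_of_isPosOp_add_of_isPosOp_sub ?_ (fun i => ?_) (fun i => ?_)
    · simp [D, Finset.sum_sub_distrib]
    · by_cases hij : i = j
      · subst hij
        have : A i + D i = (A i - (c : ℂ) • A j') + ((c - ε : ℝ) : ℂ) • A j' := by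
          simp only [D, Pi.sub_apply, Pi.single_eq_same, Pi.single_eq_of_ne hne]
          push_cast; module
        rw [this]
        exact hle.add (hAj'.ofReal_smul (by linarith [min_le_left c 1]))
      · by_cases hij' : i = j'
        · subst hij'
          simpa [D, Pi.single_eq_of_ne' hne, hij] using hAj'.add (hAj'.ofReal_smul hε.le)
        · simpa [D, hij, hij'] using hA.1.1 i
    · by_cases hij : i = j
      · subst hij
        simpa [D, Pi.single_eq_of_ne hne] using (hA.1.1 i).add (hAj'.ofReal_smul hε.le)
      · by_cases hij' : i = j'
        · subst hij'
          have : A i - D i = ((1 - ε : ℝ) : ℂ) • A i := by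
            simp only [D, Pi.sub_apply, Pi.single_eq_same, Pi.single_eq_of_ne' hne]
            push_cast; module
          rw [this]
          exact hAj'.ofReal_smul (by linarith [min_le_right c 1])
        · simpa [D, hij, hij'] using hA.1.1 i
  have hDj' := congrFun hD j'
  simp only [D, Pi.sub_apply, Pi.single_eq_same, Pi.single_eq_of_ne' hne, sub_zero,
    Pi.zero_apply] at hDj'
  exact (smul_eq_zero.1 hDj').resolve_left (by exact_mod_cast hε.ne')

lemma IsExtremeObs.coeff_eq_zero_of_eq_sum [DecidableEq Ω] (hA : IsExtremeObs A)
    (hnv : ∀ j, A j ≠ 0) {M : Ω → ℝ} (hM : ∀ i, 0 ≤ M i) {j : Ω}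
    (hj : A j = ∑ i, (M i : ℂ) • A i) {j' : Ω} (hne : j ≠ j') : M j' = 0 := by
  by_contra hM'
  refine hnv j' (hA.eq_zero_of_smul_le hne (lt_of_le_of_ne (hM j') (Ne.symm hM')) ?_)
  have hrest : A j - (M j' : ℂ) • A j' = ∑ i ∈ Finset.univ.erase j', (M i : ℂ) • A i := by
    rw [hj, ← Finset.add_sum_erase _ _ (Finset.mem_univ j'), add_sub_cancel_left]
  rw [LoewnerLE, hrest]
  exact IsPosOp.sum fun i _ => (hA.1.1 i).ofReal_smul (hM i)

lemma isRelabeling_of_stochastic_supported_on_graph {Ω' : Type*} [Fintype Ω'] [DecidableEq Ω]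
    {B : Ω' → E →ₗ[ℂ] E} {p : Ω' → Ω → ℝ} (hp1 : ∀ j, ∑ k, p k j = 1)
    (hpB : ∀ k, B k = ∑ j, (p k j : ℂ) • A j) (f : Ω' → Ω)
    (hf : ∀ k j, j ≠ f k → p k j = 0) : IsRelabeling A B := by
  refine ⟨f, fun j => ?_⟩
  have hB : ∀ k, B k = (p k (f k) : ℂ) • A (f k) := fun k => by
    rw [hpB k, Finset.sum_eq_single (f k) (fun i _ hi => by simp [hf k i hi]) (by simp)]
  calc A j = ((∑ k, p k j : ℝ) : ℂ) • A j := by rw [hp1 j, Complex.ofReal_one, one_smul]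
    _ = ∑ k ∈ Finset.univ.filter (fun k => f k = j), (p k j : ℂ) • A j := by
      rw [← Finset.sum_filter_of_ne fun k _ hk => by_contra fun h => hk (hf k j (Ne.symm h)),
        Complex.ofReal_sum, Finset.sum_smul]
    _ = ∑ k ∈ Finset.univ.filter (fun k => f k = j), B k :=
      Finset.sum_congr rfl fun k hk => by rw [hB k, (Finset.mem_filter.1 hk).2]

end

lemma sum_ofReal_smul_sum_ofReal_smul {ι κ M : Type*} [Fintype ι] [Fintype κ] [AddCommMonoid M]
    [Module ℂ M] (q : κ → ℝ) (p : κ → ι → ℝ) (A : ι → M) :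
    ∑ k, (q k : ℂ) • ∑ j, (p k j : ℂ) • A j = ∑ j, ((∑ k, q k * p k j : ℝ) : ℂ) • A j := by
  simp only [Finset.smul_sum, smul_smul, Complex.ofReal_sum, Complex.ofReal_mul, Finset.sum_smul]
  exact Finset.sum_comm

/-- A non-vanishing extreme observable is minimally sufficient. -/
theorem stmt_14 {H : Type*}
    [NormedAddCommGroup H] [InnerProductSpace ℂ H] [FiniteDimensional ℂ H]
    {Ω : Type*} [Fintype Ω] [DecidableEq Ω]
    (A : Ω → H →ₗ[ℂ] H) (hA : IsExtremeObs A) (hnv : ∀ j, A j ≠ 0) :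
    MinSufficient A := by
  intro Ω' _ B _ ⟨⟨p, hp0, hp1, hpB⟩, q, hq0, hq1, hqA⟩
  have hqp : ∀ k j j', j ≠ j' → q j k * p k j' = 0 := by
    intro k j j' hne
    have hAj : A j = ∑ i, ((∑ k, q j k * p k i : ℝ) : ℂ) • A i := by
      rw [hqA j, ← sum_ofReal_smul_sum_ofReal_smul]
      exact Finset.sum_congr rfl fun k _ => by rw [hpB k]
    have hnonneg : ∀ k i, 0 ≤ q j k * p k i := fun k i => mul_nonneg (hq0 j k) (hp0 k i)
    have hsum := hA.coeff_eq_zero_of_eq_sum hnv (fun i => Finset.sum_nonneg fun k _ =>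
      hnonneg k i) hAj hne
    exact (Finset.sum_eq_zero_iff_of_nonneg fun k _ => hnonneg k j').1 hsum k (Finset.mem_univ k)
  have hcol : ∀ k, ∃ j, q j k ≠ 0 := fun k => by
    obtain ⟨j, -, hj⟩ := Finset.exists_ne_zero_of_sum_ne_zero (hq1 k ▸ one_ne_zero)
    exact ⟨j, hj⟩
  choose f hf using hcol
  exact isRelabeling_of_stochastic_supported_on_graph hp1 hpB f fun k j hj =>
    (mul_eq_zero.1 (hqp k (f k) j (Ne.symm hj))).resolve_left (hf k)
end

section
/- Let A : Ω → L(H) be an observable on a finite-dimensional complex Hilbert space H with finite outcome set Ω = {1, …, n}, and for each j fix vectors d_{j,1}, …, d_{j,r_j} ∈ H (r_j = rank A(j)) giving a spectral decomposition A(j) = ∑_{k=1}^{r_j} |d_{j,k}⟩⟨d_{j,k}|. Let M = ℂ^{r_1} ⊕ ⋯ ⊕ ℂ^{r_n} with orthonormal basis {e_{j,k} : 1 ≤ k ≤ r_j, 1 ≤ j ≤ n}, define J : H → M by Jψ = ∑_{j,k} ⟨d_{j,k}, ψ⟩ e_{j,k}, and define P(j) = ∑_{k=1}^{r_j} |e_{j,k}⟩⟨e_{j,k}|.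 Then J is an isometry, P is a projection-valued measure on M, A(j) = J* P(j) J for all j ∈ Ω, and the vectors P(j)Jφ (j ∈ Ω, φ ∈ H) span M; that is, (M, P, J) is a minimal Naimark dilation of A. -/
open scoped ComplexOrder

/-!
The analysis operator `J` of the family `d` satisfies `J* e_{j,k} = d_{j,k}`, so compressing the
coordinate projection `P(j)` onto the `j`-th summand by `J` gives back
`∑ₖ |d_{j,k}⟩⟨d_{j,k}| = A(j)`; summing over `j` turns `∑ P(j) = 1` and `∑ A(j) = 1` into
`J* J = 1`. For minimality, orthogonality of the `d_{j,k}` within a block gives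
`P(j) J d_{j,l} = ‖d_{j,l}‖² e_{j,l}`, so every basis vector lies in the span.
-/

open scoped InnerProductSpace

section Outer

variable {E : Type*} [NormedAddCommGroup E] [InnerProductSpace ℂ E]

@[simp]
lemma outer_apply (x y z : E) : outer x y z = ⟪y, z⟫_ℂ • x := rfl

lemma outer_comp_outer (x y z w : E) : outer x y ∘ₗ outer z w = ⟪y, z⟫_ℂ • outer x w := by
  ext v
  simp [smul_smul, mul_comm]

lemma OrthonormalBasis.sum_outer_self {ι : Type*} [Fintype ι] (b : OrthonormalBasis ι ℂ E) :
    ∑ i, outer (b i) (b i) = 1 := by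
  ext x
  simpa using b.sum_repr' x

variable [FiniteDimensional ℂ E]

lemma adjoint_outer (x y : E) : LinearMap.adjoint (outer x y) = outer y x := by
  refine ((LinearMap.eq_adjoint_iff _ _).mpr fun u v => ?_).symm
  simp only [outer_apply, inner_smul_left, inner_smul_right, inner_conj_symm, mul_comm]

lemma isOrthoProj_sum_outer {ι : Type*} [Fintype ι] {e : ι → E} (he : Orthonormal ℂ e) :
    IsOrthoProj (∑ i, outer (e i) (e i)) := by
  classical
  refine ⟨by simp only [map_sum, adjoint_outer], ?_⟩
  rw [← Module.End.mul_eq_comp, Finset.sum_mul]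
  simp only [Finset.mul_sum, Module.End.mul_eq_comp, outer_comp_outer, orthonormal_iff_ite.mp he, ite_smul, one_smul, zero_smul,
    Finset.sum_ite_eq, Finset.mem_univ, if_true]

end Outer

lemma isIsometryOp_of_dilation {E F Ω : Type*} [NormedAddCommGroup E] [InnerProductSpace ℂ E]
    [FiniteDimensional ℂ E] [NormedAddCommGroup F] [InnerProductSpace ℂ F]
    [FiniteDimensional ℂ F] [Fintype Ω] {A : Ω → E →ₗ[ℂ] E} {P : Ω → F →ₗ[ℂ] F}
    {J : E →ₗ[ℂ] F} (hA : ∑ j, A j = 1) (hP : ∑ j, P j = 1)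
    (hAJ : ∀ j, A j = LinearMap.adjoint J ∘ₗ P j ∘ₗ J) : IsIsometryOp J := by
  calc LinearMap.adjoint J ∘ₗ J = LinearMap.adjoint J ∘ₗ (∑ j, P j) ∘ₗ J := by
        rw [hP, Module.End.one_eq_id, LinearMap.id_comp]
    _ = ∑ j, A j := by ext; simp [hAJ, LinearMap.sum_apply]
    _ = 1 := hA

section Blocks

variable {Ω : Type*} [Fintype Ω] [DecidableEq Ω] {κ : Ω → Type*} [∀ j, Fintype (κ j)]
  [∀ j, DecidableEq (κ j)]

noncomputable def blockProj (j : Ω) :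
    EuclideanSpace ℂ (Σ j, κ j) →ₗ[ℂ] EuclideanSpace ℂ (Σ j, κ j) :=
  ∑ k : κ j, outer (EuclideanSpace.single ⟨j, k⟩ 1) (EuclideanSpace.single ⟨j, k⟩ 1)

lemma isPVM_blockProj : IsPVM (blockProj (κ := κ)) := by
  refine ⟨fun j => isOrthoProj_sum_outer ?_, ?_⟩
  · exact EuclideanSpace.orthonormal_single.comp _ sigma_mk_injective
  · simpa only [blockProj, EuclideanSpace.basisFun_apply, Fintype.sum_sigma] using
      (EuclideanSpace.basisFun (Σ j, κ j) ℂ).sum_outer_self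

variable {H : Type*} [NormedAddCommGroup H] [InnerProductSpace ℂ H]
  {d : ∀ j, κ j → H} {J : H →ₗ[ℂ] EuclideanSpace ℂ (Σ j, κ j)}

lemma adjoint_comp_blockProj_comp [FiniteDimensional ℂ H]
    (hJ : ∀ ψ p, ⟪EuclideanSpace.single p (1 : ℂ), J ψ⟫_ℂ = ⟪d p.1 p.2, ψ⟫_ℂ) (j : Ω) :
    LinearMap.adjoint J ∘ₗ blockProj j ∘ₗ J = ∑ k, outer (d j k) (d j k) := by
  have hJadj : ∀ p, LinearMap.adjoint J (EuclideanSpace.single p 1) = d p.1 p.2 := fun p =>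
    ext_inner_right ℂ fun ψ => by rw [LinearMap.adjoint_inner_left, hJ]
  ext ψ
  simp [blockProj, LinearMap.sum_apply, hJadj, hJ]

lemma span_blockProj_comp_eq_top
    (hJ : ∀ ψ p, ⟪EuclideanSpace.single p (1 : ℂ), J ψ⟫_ℂ = ⟪d p.1 p.2, ψ⟫_ℂ)
    (horth : ∀ j (k l : κ j), k ≠ l → ⟪d j k, d j l⟫_ℂ = 0) (hnz : ∀ j k, d j k ≠ 0) :
    Submodule.span ℂ {x | ∃ j φ, x = blockProj j (J φ)} = ⊤ := by
  rw [eq_top_iff, ← (EuclideanSpace.basisFun (Σ j, κ j) ℂ).toBasis.span_eq, Submodule.span_le]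
  rintro _ ⟨⟨j, l⟩, rfl⟩
  have hdiag : blockProj j (J (d j l)) = ⟪d j l, d j l⟫_ℂ • EuclideanSpace.single ⟨j, l⟩ 1 := by
    simp only [blockProj, LinearMap.sum_apply, outer_apply, hJ]
    exact Finset.sum_eq_single l (fun k _ hk => by rw [horth j k l hk, zero_smul])
      (by simp)
  have hd : ⟪d j l, d j l⟫_ℂ ≠ 0 := inner_self_ne_zero.mpr (hnz j l)
  rw [OrthonormalBasis.coe_toBasis, EuclideanSpace.basisFun_apply,
    ← inv_smul_smul₀ hd (EuclideanSpace.single _ _), ← hdiag]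
  exact Submodule.smul_mem _ _ (Submodule.subset_span ⟨j, d j l, rfl⟩)

end Blocks

theorem stmt_17_general {H : Type*}
    [NormedAddCommGroup H] [InnerProductSpace ℂ H] [FiniteDimensional ℂ H]
    {n : ℕ} (r : Fin n → ℕ)
    (A : Fin n → H →ₗ[ℂ] H) (hA : IsPOVM A)
    (d : ∀ j : Fin n, Fin (r j) → H)
    (hspec : ∀ j, A j = ∑ k, outer (d j k) (d j k))
    (horth : ∀ j (k l : Fin (r j)), k ≠ l → (inner ℂ (d j k) (d j l) : ℂ) = 0)
    (hnz : ∀ j k, d j k ≠ 0)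
    (J : H →ₗ[ℂ] EuclideanSpace ℂ (Σ j : Fin n, Fin (r j)))
    (hJ : ∀ (ψ : H) (p : Σ j : Fin n, Fin (r j)),
      (inner ℂ (EuclideanSpace.single p (1 : ℂ)) (J ψ) : ℂ) = (inner ℂ (d p.1 p.2) ψ : ℂ))
    (P : Fin n → (EuclideanSpace ℂ (Σ j : Fin n, Fin (r j)) →ₗ[ℂ]
      EuclideanSpace ℂ (Σ j : Fin n, Fin (r j))))
    (hP : ∀ j, P j = ∑ k : Fin (r j),
      outer (EuclideanSpace.single (⟨j, k⟩ : Σ j : Fin n, Fin (r j)) (1 : ℂ))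
            (EuclideanSpace.single (⟨j, k⟩ : Σ j : Fin n, Fin (r j)) (1 : ℂ))) :
    IsIsometryOp J ∧ IsPVM P ∧ (∀ j, A j = LinearMap.adjoint J ∘ₗ P j ∘ₗ J) ∧
    IsMinimalNaimark A P J := by
  obtain rfl : P = blockProj := funext hP
  have hPVM : IsPVM (blockProj (κ := fun j => Fin (r j))) := isPVM_blockProj
  have hAJ : ∀ j, A j = LinearMap.adjoint J ∘ₗ blockProj j ∘ₗ J := fun j => by
    rw [hspec, adjoint_comp_blockProj_comp hJ]
  have hiso : IsIsometryOp J := isIsometryOp_of_dilation hA.2 hPVM.2 hAJ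
  exact ⟨hiso, hPVM, hAJ, ⟨hPVM, hiso, hAJ⟩, span_blockProj_comp_eq_top hJ horth hnz⟩

/-- The concrete construction of a minimal Naimark dilation from spectral
decompositions `A(j) = ∑ₖ |d_{j,k}⟩⟨d_{j,k}|` with `r_j = rank A(j)`:
`M = ℂ^{r_1} ⊕ ⋯ ⊕ ℂ^{r_n}`, `Jψ = ∑_{j,k} ⟨d_{j,k}, ψ⟩ e_{j,k}`,
`P(j) = ∑ₖ |e_{j,k}⟩⟨e_{j,k}|` yield a minimal Naimark dilation `(M, P, J)` of `A`. -/
theorem stmt_17 {H : Type*}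
    [NormedAddCommGroup H] [InnerProductSpace ℂ H] [FiniteDimensional ℂ H]
    {n : ℕ} (r : Fin n → ℕ)
    (A : Fin n → H →ₗ[ℂ] H) (hA : IsPOVM A)
    (d : ∀ j : Fin n, Fin (r j) → H)
    (hspec : ∀ j, A j = ∑ k, outer (d j k) (d j k))
    (horth : ∀ j (k l : Fin (r j)), k ≠ l → (inner ℂ (d j k) (d j l) : ℂ) = 0)
    (hnz : ∀ j k, d j k ≠ 0)
    (hrank : ∀ j, r j = Module.finrank ℂ ↥(LinearMap.range (A j)))
    (J : H →ₗ[ℂ] EuclideanSpace ℂ (Σ j : Fin n, Fin (r j)))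
    (hJ : ∀ (ψ : H) (p : Σ j : Fin n, Fin (r j)),
      (inner ℂ (EuclideanSpace.single p (1 : ℂ)) (J ψ) : ℂ) = (inner ℂ (d p.1 p.2) ψ : ℂ))
    (P : Fin n → (EuclideanSpace ℂ (Σ j : Fin n, Fin (r j)) →ₗ[ℂ]
      EuclideanSpace ℂ (Σ j : Fin n, Fin (r j))))
    (hP : ∀ j, P j = ∑ k : Fin (r j),
      outer (EuclideanSpace.single (⟨j, k⟩ : Σ j : Fin n, Fin (r j)) (1 : ℂ))
            (EuclideanSpace.single (⟨j, k⟩ : Σ j : Fin n, Fin (r j)) (1 : ℂ))) :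
    IsIsometryOp J ∧ IsPVM P ∧ (∀ j, A j = LinearMap.adjoint J ∘ₗ P j ∘ₗ J) ∧
    IsMinimalNaimark A P J :=
  stmt_17_general r A hA d hspec horth hnz J hJ P hP
end
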